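/- Fix t > 0 and r ∈ (0,1), and let B_n(r) := E[Σ_{u,w ∈ T'_n} r^{d(u,w)}] for the weighted random recursive tree with root weight t. Then there exists a constant C > 0 (depending on r and t) such that for all n ≥ 0, B_n(r) ≤ C Σ_{k=0}^n (n+1)^{2r}/(k+1)^{2r}. -/

import Mathlib

open MeasureTheory ProbabilityTheory Filter Topology

instance : MeasurableSpace (Option ℕ) := ⊤

/-- Depth (graph distance to the root `o`) of the vertex `w n` in the recursive tree
whose parent map is `P` : `P n = none` means the parent of `w n` is the root `o`, and
`P n = some j` (with `j < n`) means the parent of `w n` is `w j`. -/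
def wrrtDepth (P : ℕ → Option ℕ) : ℕ → ℕ
  | n =>
    match P n with
    | none => 1
    | some j => if h : j < n then wrrtDepth P j + 1 else 1
termination_by n => n

/-- The parent of a vertex (`none` is the root `o`, `some n` is the vertex `w n`). -/
def wrrtParent (P : ℕ → Option ℕ) : Option ℕ → Option ℕ
  | none => none
  | some n =>
    match P n with
    | none => none
    | some j => if j < n then some j else none

/-- Depth of a vertex of the recursive tree (`none` is the root `o`). -/
def wrrtDepthV (P : ℕ → Option ℕ) : Option ℕ → ℕ
  | none => 0
  | some n => wrrtDepth P n

def wrrtDistAux (P : ℕ → Option ℕ) : ℕ → Option ℕ → Option ℕ → ℕ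
  | 0, _, _ => 0
  | fuel + 1, u, w =>
    if u = w then 0
    else if wrrtDepthV P u < wrrtDepthV P w then wrrtDistAux P fuel u (wrrtParent P w) + 1
    else wrrtDistAux P fuel (wrrtParent P u) w + 1

/-- Graph distance `d(u,w)` between two vertices of the recursive tree with parent
map `P`: repeatedly move the deeper vertex to its parent until the two meet. -/
def wrrtDist (P : ℕ → Option ℕ) (u w : Option ℕ) : ℕ :=
  wrrtDistAux P (wrrtDepthV P u + wrrtDepthV P w) u w

/-- `A_n(r) = E [ ∑_{u ∈ T'_n} r^{d(u)} ]`, the sum over the non-root vertices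
`w_0, …, w_n` of the random recursive tree with (random) parent maps `p · ω`. -/
noncomputable def wrrtA {Ω : Type*} [MeasurableSpace Ω] (μ : Measure Ω) (r : ℝ)
    (p : ℕ → Ω → Option ℕ) (n : ℕ) : ℝ :=
  ∫ ω, (∑ u ∈ Finset.range (n + 1), r ^ wrrtDepth (fun k => p k ω) u) ∂μ

/-- `B_n(r) = E [ ∑_{u,w ∈ T'_n} r^{d(u,w)} ]`, the sum over all ordered pairs of
non-root vertices of the random recursive tree with (random) parent maps `p · ω`. -/
noncomputable def wrrtB {Ω : Type*} [MeasurableSpace Ω] (μ : Measure Ω) (r : ℝ)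
    (p : ℕ → Ω → Option ℕ) (n : ℕ) : ℝ :=
  ∫ ω, (∑ u ∈ Finset.range (n + 1), ∑ w ∈ Finset.range (n + 1),
      r ^ wrrtDist (fun k => p k ω) (some u) (some w)) ∂μ


/-!
Write `P(a, b) = E[r^{d(a,b)}]`. The vertex `w n` is a leaf of `T_n` whose parent is
independent of `T_{n-1}`, so for older `u` first-step analysis gives
`P(u, w n) = r (t P(u, o) + ∑_{j<n} P(u, w j)) / (n + t)`. Summing over `u` and bounding
`P(u, o) ≤ 1` yields `B_{n+1} ≤ (1 + 2r/(n+1+t)) B_n + 1 + 2rt`, which unrolls to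
`B_n ≤ (1 + 2rt) ∑_k ∏_{j=k+1}^n (1 + 2r/(j+t))`. Finally `1 + x ≤ eˣ` and
`∑_{j=k+1}^n 1/(j+t) ≤ log ((n+t)/(k+t))` bound each product by `((n+t)/(k+t))^{2r}`,
which is comparable to `((n+1)/(k+1))^{2r}`.
-/

section Combinatorics

/-- `v` is a vertex of `T_{n-1}`: the root or some `w j` with `j < n`. -/
def wrrtBelow (n : ℕ) : Option ℕ → Prop
  | none => True
  | some j => j < n

variable {P Q : ℕ → Option ℕ}

lemma wrrtBelow.mono {m n : ℕ} (hmn : m ≤ n) : ∀ {v}, wrrtBelow m v → wrrtBelow n v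
  | none, _ => trivial
  | some _, hv => lt_of_lt_of_le hv hmn

lemma wrrtBelow_parent_some (n : ℕ) : wrrtBelow n (wrrtParent P (some n)) := by
  rcases h : P n with _ | j
  · simp [wrrtParent, h, wrrtBelow]
  · by_cases hj : j < n <;> simp [wrrtParent, h, hj, wrrtBelow]

lemma wrrtBelow.parent {n : ℕ} : ∀ {v}, wrrtBelow n v → wrrtBelow n (wrrtParent P v)
  | none, _ => trivial
  | some j, hj => (wrrtBelow_parent_some j).mono hj.le

lemma wrrtDepthV_parent_some_add_one (n : ℕ) :
    wrrtDepthV P (wrrtParent P (some n)) + 1 = wrrtDepthV P (some n) := by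
  rw [wrrtDepthV, wrrtDepth]
  rcases h : P n with _ | j
  · simp [wrrtParent, h, wrrtDepthV]
  · by_cases hj : j < n <;> simp [wrrtParent, h, hj, wrrtDepthV]

lemma wrrtDepthV_eq_zero_iff {v : Option ℕ} : wrrtDepthV P v = 0 ↔ v = none := by
  rcases v with _ | n
  · simp [wrrtDepthV]
  · simp only [reduceCtorEq, iff_false]
    rw [← wrrtDepthV_parent_some_add_one]
    omega

lemma wrrtDistAux_succ (f : ℕ) (a b : Option ℕ) : wrrtDistAux P (f + 1) a b =
    if a = b then 0
    else if wrrtDepthV P a < wrrtDepthV P b then wrrtDistAux P f a (wrrtParent P b) + 1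
    else wrrtDistAux P f (wrrtParent P a) b + 1 := rfl

lemma wrrtDistAux_self (f : ℕ) (a : Option ℕ) : wrrtDistAux P f a a = 0 := by
  cases f <;> simp [wrrtDistAux]

/-- One further step from either pair moves the other vertex up, reaching the same pair. -/
lemma wrrtDistAux_parent_left_eq_parent_right (f : ℕ) {a b : Option ℕ} (hab : a ≠ b)
    (hd : wrrtDepthV P a = wrrtDepthV P b) :
    wrrtDistAux P f (wrrtParent P a) b = wrrtDistAux P f a (wrrtParent P b) := by
  rcases a with _ | m
  · exact absurd (wrrtDepthV_eq_zero_iff.1 hd.symm).symm hab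
  rcases b with _ | m'
  · exact absurd (wrrtDepthV_eq_zero_iff.1 hd) hab
  have hpa := wrrtDepthV_parent_some_add_one (P := P) m
  have hpb := wrrtDepthV_parent_some_add_one (P := P) m'
  cases f with
  | zero => rfl
  | succ g =>
    have h₁ : wrrtParent P (some m) ≠ some m' := fun h => by rw [h] at hpa; omega
    have h₂ : some m ≠ wrrtParent P (some m') := fun h => by rw [← h] at hpb; omega
    rw [wrrtDistAux_succ, wrrtDistAux_succ, if_neg h₁, if_neg h₂,
      if_pos (by omega), if_neg (by omega)]

lemma wrrtDistAux_comm (f : ℕ) (a b : Option ℕ) :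
    wrrtDistAux P f a b = wrrtDistAux P f b a := by
  induction f generalizing a b with
  | zero => rfl
  | succ g ih =>
    rw [wrrtDistAux_succ, wrrtDistAux_succ]
    by_cases hab : a = b
    · simp [hab]
    rw [if_neg hab, if_neg (Ne.symm hab)]
    rcases lt_trichotomy (wrrtDepthV P a) (wrrtDepthV P b) with h | h | h
    · rw [if_pos h, if_neg (lt_asymm h), ih]
    · rw [if_neg h.not_lt, if_neg h.symm.not_lt, ih (wrrtParent P b),
        wrrtDistAux_parent_left_eq_parent_right g hab h]
    · rw [if_neg (lt_asymm h), if_pos h, ih]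

lemma wrrtDist_comm (a b : Option ℕ) : wrrtDist P a b = wrrtDist P b a := by
  rw [wrrtDist, wrrtDist, add_comm, wrrtDistAux_comm]

lemma wrrtDist_self (a : Option ℕ) : wrrtDist P a a = 0 := wrrtDistAux_self _ a

/-- The fuel `wrrtDepthV P a + wrrtDepthV P b` in `wrrtDist` is exact: every step lowers
the depth sum by one, so `wrrtDist` satisfies the recursion of `wrrtDistAux` without fuel. -/
lemma wrrtDist_eq (a b : Option ℕ) : wrrtDist P a b =
    if a = b then 0
    else if wrrtDepthV P a < wrrtDepthV P b then wrrtDist P a (wrrtParent P b) + 1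
    else wrrtDist P (wrrtParent P a) b + 1 := by
  by_cases hab : a = b
  · rw [if_pos hab, hab, wrrtDist_self]
  rw [if_neg hab]
  split_ifs with hlt
  · obtain ⟨m, rfl⟩ : ∃ m, b = some m := Option.ne_none_iff_exists'.1 fun h => by
      simp [h, wrrtDepthV] at hlt
    have hd : wrrtDepthV P a + wrrtDepthV P (some m) =
        wrrtDepthV P a + wrrtDepthV P (wrrtParent P (some m)) + 1 := by
      rw [← wrrtDepthV_parent_some_add_one m]; omega
    rw [wrrtDist, hd, wrrtDistAux_succ, if_neg hab, if_pos hlt, wrrtDist]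
  · obtain ⟨m, rfl⟩ : ∃ m, a = some m := Option.ne_none_iff_exists'.1 fun h => by
      subst h
      exact hab (wrrtDepthV_eq_zero_iff.1 (by simp [wrrtDepthV] at hlt ⊢; omega)).symm
    have hd : wrrtDepthV P (some m) + wrrtDepthV P b =
        wrrtDepthV P (wrrtParent P (some m)) + wrrtDepthV P b + 1 := by
      rw [← wrrtDepthV_parent_some_add_one m]; omega
    rw [wrrtDist, hd, wrrtDistAux_succ, if_neg hab, if_neg hlt, wrrtDist]

/-- A new vertex `w n` is a leaf of `T_n`, so every older vertex reaches it through its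
parent. -/
lemma wrrtDist_some_eq_wrrtDist_parent_add_one {n : ℕ} {a : Option ℕ} (ha : wrrtBelow n a) :
    wrrtDist P a (some n) = wrrtDist P a (wrrtParent P (some n)) + 1 := by
  have hpn := wrrtDepthV_parent_some_add_one (P := P) n
  induction hd : wrrtDepthV P a using Nat.strong_induction_on generalizing a with
  | _ d ih =>
  have hne : a ≠ some n := by
    rintro rfl
    exact lt_irrefl n ha
  rw [wrrtDist_eq a (some n), if_neg hne]
  split_ifs with hlt
  · rfl
  obtain ⟨m, rfl⟩ : ∃ m, a = some m := Option.ne_none_iff_exists'.1 fun h => by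
    subst h; exact hlt (by simp only [wrrtDepthV] at hpn ⊢; omega)
  have hpm := wrrtDepthV_parent_some_add_one (P := P) m
  have hne' : some m ≠ wrrtParent P (some n) := fun h => by rw [← h] at hpn; omega
  rw [ih _ (by omega) ((wrrtBelow_parent_some m).mono ha.le) rfl,
    wrrtDist_eq (some m) (wrrtParent P (some n)), if_neg hne', if_neg (by omega)]

lemma wrrtDepth_congr {n : ℕ} (hPQ : ∀ k < n, P k = Q k) {j : ℕ} (hj : j < n) :
    wrrtDepth P j = wrrtDepth Q j := by
  induction j using Nat.strong_induction_on with
  | _ j ih =>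
  rw [wrrtDepth, wrrtDepth, hPQ j hj]
  rcases Q j with _ | i
  · rfl
  · by_cases hi : i < j
    · simp only [hi, dif_pos, ih i hi (hi.trans hj)]
    · simp [hi]

lemma wrrtDepthV_congr {n : ℕ} (hPQ : ∀ k < n, P k = Q k) :
    ∀ {v}, wrrtBelow n v → wrrtDepthV P v = wrrtDepthV Q v
  | none, _ => rfl
  | some _, hj => wrrtDepth_congr hPQ hj

lemma wrrtParent_congr {n : ℕ} (hPQ : ∀ k < n, P k = Q k) :
    ∀ {v}, wrrtBelow n v → wrrtParent P v = wrrtParent Q v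
  | none, _ => rfl
  | some j, hj => by simp only [wrrtParent, hPQ j hj]

lemma wrrtDist_congr {n : ℕ} (hPQ : ∀ k < n, P k = Q k) {a b : Option ℕ}
    (ha : wrrtBelow n a) (hb : wrrtBelow n b) : wrrtDist P a b = wrrtDist Q a b := by
  rw [wrrtDist, wrrtDist, wrrtDepthV_congr hPQ ha, wrrtDepthV_congr hPQ hb]
  induction wrrtDepthV Q a + wrrtDepthV Q b generalizing a b with
  | zero => rfl
  | succ g ih =>
    rw [wrrtDistAux_succ, wrrtDistAux_succ, wrrtDepthV_congr hPQ ha, wrrtDepthV_congr hPQ hb,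
      wrrtParent_congr hPQ ha, wrrtParent_congr hPQ hb,
      ih ha (wrrtParent_congr hPQ hb ▸ hb.parent), ih (wrrtParent_congr hPQ ha ▸ ha.parent) hb]

end Combinatorics

section Probability

variable {Ω : Type*} [MeasurableSpace Ω] {μ : Measure Ω}

lemma integral_apply_eq_sum_of_indepFun [IsFiniteMeasure μ] {α : Type*} [MeasurableSpace α]
    [MeasurableSingletonClass α] {X : Ω → α} (hX : Measurable X) {S : Finset α}
    (hS : ∀ᵐ ω ∂μ, X ω ∈ S) {Y : α → Ω → ℝ} (hY : ∀ c ∈ S, Integrable (Y c) μ)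
    (hXY : ∀ c ∈ S, IndepFun X (Y c) μ) :
    ∫ ω, Y (X ω) ω ∂μ = ∑ c ∈ S, μ.real (X ⁻¹' {c}) * ∫ ω, Y c ω ∂μ := by
  have hind : ∀ c ∈ S, IndepFun ((X ⁻¹' {c}).indicator (1 : Ω → ℝ)) (Y c) μ := fun c hc =>
    (hXY c hc).comp (φ := ({c} : Set α).indicator 1)
      (measurable_one.indicator (measurableSet_singleton c)) measurable_id
  have hsplit : ∀ᵐ ω ∂μ, Y (X ω) ω = ∑ c ∈ S, (X ⁻¹' {c}).indicator 1 ω * Y c ω := by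
    filter_upwards [hS] with ω hω
    rw [Finset.sum_eq_single_of_mem _ hω fun c _ hc => by simp [Ne.symm hc]]
    simp
  rw [integral_congr_ae hsplit, integral_finsetSum]
  · refine Finset.sum_congr rfl fun c hc => ?_
    rw [(hind c hc).integral_fun_mul_eq_mul_integral
      ((measurable_one.indicator (hX (measurableSet_singleton c))).aestronglyMeasurable)
      (hY c hc).aestronglyMeasurable, integral_indicator_one (hX (measurableSet_singleton c))]
  · exact fun c hc => (hind c hc).integrable_mul
      ((integrable_const 1).indicator (hX (measurableSet_singleton c))) (hY c hc)

variable {p : ℕ → Ω → Option ℕ}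

def wrrtDistOfParents (n : ℕ) (a b : Option ℕ) (q : Finset.range n → Option ℕ) : ℕ :=
  wrrtDist (fun k => if hk : k ∈ Finset.range n then q ⟨k, hk⟩ else none) a b

lemma wrrtDist_eq_wrrtDistOfParents (P : ℕ → Option ℕ) {n : ℕ} {a b : Option ℕ}
    (ha : wrrtBelow n a) (hb : wrrtBelow n b) :
    wrrtDist P a b = wrrtDistOfParents n a b (fun k => P k) :=
  wrrtDist_congr (fun k hk => by simp [hk]) ha hb

lemma measurable_wrrtDist (hp : ∀ n, Measurable (p n)) {n : ℕ} {a b : Option ℕ}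
    (ha : wrrtBelow n a) (hb : wrrtBelow n b) :
    Measurable fun ω => wrrtDist (fun k => p k ω) a b := by
  simp_rw [wrrtDist_eq_wrrtDistOfParents _ ha hb]
  exact (Measurable.of_discrete (f := wrrtDistOfParents n a b)).comp
    (measurable_pi_lambda (fun ω (k : Finset.range n) => p k ω) fun k => hp k)

lemma indepFun_wrrtDist (hp : ∀ n, Measurable (p n))
    (hindep : iIndepFun (m := fun _ : ℕ => (inferInstance : MeasurableSpace (Option ℕ))) p μ)
    {n : ℕ} {a b : Option ℕ} (ha : wrrtBelow n a) (hb : wrrtBelow n b) :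
    IndepFun (p n) (fun ω => wrrtDist (fun k => p k ω) a b) μ := by
  simp_rw [wrrtDist_eq_wrrtDistOfParents _ ha hb]
  exact (hindep.indepFun_finset {n} (Finset.range n) (by simp) hp).comp
    (φ := fun q => q ⟨n, Finset.mem_singleton_self n⟩) (ψ := wrrtDistOfParents n a b)
    Measurable.of_discrete Measurable.of_discrete

end Probability

section PGF

variable {Ω : Type*} [MeasurableSpace Ω] {μ : Measure Ω} [IsProbabilityMeasure μ]
  {p : ℕ → Ω → Option ℕ} {r t : ℝ}

noncomputable def wrrtDistPGF (μ : Measure Ω) (r : ℝ) (p : ℕ → Ω → Option ℕ)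
    (a b : Option ℕ) : ℝ :=
  ∫ ω, r ^ wrrtDist (fun k => p k ω) a b ∂μ

omit [IsProbabilityMeasure μ] in
lemma integrable_pow_wrrtDist [IsFiniteMeasure μ] (hp : ∀ n, Measurable (p n)) (hr0 : 0 ≤ r)
    (hr1 : r ≤ 1) {n : ℕ} {a b : Option ℕ} (ha : wrrtBelow n a) (hb : wrrtBelow n b) :
    Integrable (fun ω => r ^ wrrtDist (fun k => p k ω) a b) μ :=
  .of_bound ((Measurable.of_discrete (f := (r ^ · : ℕ → ℝ))).comp
      (measurable_wrrtDist hp ha hb)).aestronglyMeasurable 1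
    (.of_forall fun _ => by simpa [abs_of_nonneg hr0] using pow_le_one₀ hr0 hr1)

lemma wrrtDistPGF_le_one (hr0 : 0 ≤ r) (hr1 : r ≤ 1) (a b : Option ℕ) :
    wrrtDistPGF μ r p a b ≤ 1 := by
  simpa [wrrtDistPGF] using integral_mono_of_nonneg (μ := μ) (f := fun ω => r ^ wrrtDist (fun k => p k ω) a b)
    (.of_forall fun _ => pow_nonneg hr0 _) (integrable_const (1 : ℝ))
    (.of_forall fun _ => pow_le_one₀ hr0 hr1)

lemma wrrtDistPGF_self (a : Option ℕ) : wrrtDistPGF μ r p a a = 1 := by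
  simp [wrrtDistPGF, wrrtDist_self]

omit [IsProbabilityMeasure μ] in
lemma wrrtDistPGF_comm (a b : Option ℕ) : wrrtDistPGF μ r p a b = wrrtDistPGF μ r p b a := by
  simp_rw [wrrtDistPGF, wrrtDist_comm _ a]

section Parents

variable (hp : ∀ n, Measurable (p n))
  (hroot : ∀ n : ℕ, μ {ω | p n ω = none} = ENNReal.ofReal (t / (n + t)))
  (hparent : ∀ n : ℕ, ∀ j < n, μ {ω | p n ω = some j} = ENNReal.ofReal (1 / (n + t)))
include hp hroot hparent

/-- The prescribed parent probabilities `t/(n+t)` and `1/(n+t)` already add up to one. -/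
lemma ae_parent_mem (ht : 0 < t) (n : ℕ) :
    ∀ᵐ ω ∂μ, p n ω ∈ insert none ((Finset.range n).image some) := by
  set S := insert none ((Finset.range n).image some)
  have hS : MeasurableSet (p n ⁻¹' S) := hp n (Set.toFinite _).measurableSet
  change μ (p n ⁻¹' S)ᶜ = 0
  rw [prob_compl_eq_zero_iff hS, ← sum_measure_preimage_singleton _
    fun c _ => hp n (measurableSet_singleton c), Finset.sum_insert (by simp),
    Finset.sum_image (by simp)]
  rw [show μ (p n ⁻¹' {none}) = _ from hroot n,
    Finset.sum_congr rfl fun j hj =>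
      show μ (p n ⁻¹' {some j}) = _ from hparent n j (Finset.mem_range.1 hj),
    ← ENNReal.ofReal_sum_of_nonneg fun _ _ => by positivity,
    ← ENNReal.ofReal_add (by positivity) (by positivity), ENNReal.ofReal_eq_one]
  have : (0 : ℝ) < n + t := by positivity
  simp only [Finset.sum_const, Finset.card_range, nsmul_eq_mul]
  field_simp
  rw [add_comm]

variable (hindep : iIndepFun (m := fun _ : ℕ => (inferInstance : MeasurableSpace (Option ℕ))) p μ)
include hindep

/-- First-step analysis at the newest vertex `w n`: the distance from an older vertex grows
by one over the distance to the parent of `w n`, which is independent of `T_{n-1}`. -/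
lemma wrrtDistPGF_some_eq (ht : 0 < t) (hr0 : 0 ≤ r) (hr1 : r ≤ 1) {n : ℕ} {a : Option ℕ}
    (ha : wrrtBelow n a) :
    wrrtDistPGF μ r p a (some n) = r * (t / (n + t) * wrrtDistPGF μ r p a none +
      ∑ j ∈ Finset.range n, 1 / (n + t) * wrrtDistPGF μ r p a (some j)) := by
  set ρ : Option ℕ → Option ℕ := fun c => wrrtParent (fun _ => c) (some n)
  have hρ : ∀ c, wrrtBelow n (ρ c) := fun c => wrrtBelow_parent_some n
  have hstep : wrrtDistPGF μ r p a (some n) =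
      r * ∫ ω, (fun c ω => r ^ wrrtDist (fun k => p k ω) a (ρ c)) (p n ω) ω ∂μ := by
    rw [wrrtDistPGF, ← integral_const_mul]
    congr with ω
    rw [wrrtDist_some_eq_wrrtDist_parent_add_one ha, pow_succ, mul_comm]
    rfl
  rw [hstep, integral_apply_eq_sum_of_indepFun (hp n) (ae_parent_mem hp hroot hparent ht n)
      (fun c _ => integrable_pow_wrrtDist hp hr0 hr1 ha (hρ c))
      (fun c _ => (indepFun_wrrtDist hp hindep ha (hρ c)).comp measurable_id
        Measurable.of_discrete),
    Finset.sum_insert (by simp), Finset.sum_image (by simp)]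
  congr 2
  · rw [measureReal_def, show μ (p n ⁻¹' {none}) = _ from hroot n,
      ENNReal.toReal_ofReal (by positivity)]
    rfl
  · refine Finset.sum_congr rfl fun j hj => ?_
    have hj : j < n := Finset.mem_range.1 hj
    rw [measureReal_def, show μ (p n ⁻¹' {some j}) = _ from hparent n j hj,
      ENNReal.toReal_ofReal (by positivity)]
    simp [ρ, wrrtParent, hj, wrrtDistPGF]

end Parents

end PGF

section B

variable {Ω : Type*} [MeasurableSpace Ω] {μ : Measure Ω} [IsProbabilityMeasure μ]
  {p : ℕ → Ω → Option ℕ} {r t : ℝ}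

lemma wrrtB_eq_sum_wrrtDistPGF (hp : ∀ n, Measurable (p n)) (hr0 : 0 ≤ r) (hr1 : r ≤ 1)
    (n : ℕ) : wrrtB μ r p n = ∑ u ∈ Finset.range (n + 1), ∑ w ∈ Finset.range (n + 1),
      wrrtDistPGF μ r p (some u) (some w) := by
  have hint : ∀ u ∈ Finset.range (n + 1), ∀ w ∈ Finset.range (n + 1),
      Integrable (fun ω => r ^ wrrtDist (fun k => p k ω) (some u) (some w)) μ :=
    fun u hu w hw => integrable_pow_wrrtDist hp hr0 hr1
      (Finset.mem_range.1 hu : wrrtBelow (n + 1) (some u)) (Finset.mem_range.1 hw)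
  rw [wrrtB, integral_finsetSum _ fun u hu => integrable_finsetSum _ (hint u hu)]
  exact Finset.sum_congr rfl fun u hu => integral_finsetSum _ (hint u hu)

lemma wrrtB_zero : wrrtB μ r p 0 = 1 := by
  simp [wrrtB, wrrtDist_self]

lemma wrrtB_succ_eq (hp : ∀ n, Measurable (p n)) (hr0 : 0 ≤ r) (hr1 : r ≤ 1) (n : ℕ) :
    wrrtB μ r p (n + 1) = wrrtB μ r p n +
      2 * ∑ u ∈ Finset.range (n + 1), wrrtDistPGF μ r p (some u) (some (n + 1)) + 1 := by
  have hrow : ∀ u, ∑ w ∈ Finset.range (n + 1 + 1), wrrtDistPGF μ r p (some u) (some w) =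
      ∑ w ∈ Finset.range (n + 1), wrrtDistPGF μ r p (some u) (some w) +
        wrrtDistPGF μ r p (some u) (some (n + 1)) := fun u => Finset.sum_range_succ _ _
  rw [wrrtB_eq_sum_wrrtDistPGF hp hr0 hr1, wrrtB_eq_sum_wrrtDistPGF hp hr0 hr1,
    Finset.sum_range_succ, Finset.sum_congr rfl fun u _ => hrow u, hrow,
    Finset.sum_add_distrib, wrrtDistPGF_self]
  simp_rw [wrrtDistPGF_comm (some (n + 1))]
  ring

lemma sum_wrrtDistPGF_some_succ_le (ht : 0 < t) (hr0 : 0 ≤ r) (hr1 : r ≤ 1)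
    (hp : ∀ n, Measurable (p n))
    (hroot : ∀ n : ℕ, μ {ω | p n ω = none} = ENNReal.ofReal (t / (n + t)))
    (hparent : ∀ n : ℕ, ∀ j < n, μ {ω | p n ω = some j} = ENNReal.ofReal (1 / (n + t)))
    (hindep : iIndepFun (m := fun _ : ℕ => (inferInstance : MeasurableSpace (Option ℕ))) p μ)
    (n : ℕ) :
    ∑ u ∈ Finset.range (n + 1), wrrtDistPGF μ r p (some u) (some (n + 1)) ≤
      r * t + r / ((n + 1 : ℕ) + t) * wrrtB μ r p n := by
  set N : ℝ := (n + 1 : ℕ) + t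
  have hN : 0 < N := by positivity
  calc ∑ u ∈ Finset.range (n + 1), wrrtDistPGF μ r p (some u) (some (n + 1))
      ≤ ∑ u ∈ Finset.range (n + 1), (r * t / N + r / N *
          ∑ j ∈ Finset.range (n + 1), wrrtDistPGF μ r p (some u) (some j)) := by
        refine Finset.sum_le_sum fun u hu => ?_
        rw [wrrtDistPGF_some_eq hp hroot hparent hindep ht hr0 hr1
          (show wrrtBelow (n + 1) (some u) from Finset.mem_range.1 hu), ← Finset.mul_sum]
        have := wrrtDistPGF_le_one (μ := μ) (p := p) hr0 hr1 (some u) none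
        calc r * (t / N * wrrtDistPGF μ r p (some u) none + 1 / N * _)
            ≤ r * (t / N * 1 + 1 / N * _) := by gcongr
          _ = _ := by ring
    _ = (n + 1) * (r * t / N) + r / N * wrrtB μ r p n := by
        rw [Finset.sum_add_distrib, Finset.sum_const, Finset.card_range, nsmul_eq_mul,
          ← Finset.mul_sum, wrrtB_eq_sum_wrrtDistPGF hp hr0 hr1]
        push_cast
        ring
    _ ≤ r * t + r / N * wrrtB μ r p n := by
        have : (n + 1) * (r * t / N) ≤ r * t := by
          rw [mul_div_assoc', div_le_iff₀ hN]
          have : (0 : ℝ) ≤ r * t * t := by positivity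
          simp only [N]
          push_cast
          nlinarith
        linarith

lemma wrrtB_succ_le (ht : 0 < t) (hr0 : 0 ≤ r) (hr1 : r ≤ 1)
    (hp : ∀ n, Measurable (p n))
    (hroot : ∀ n : ℕ, μ {ω | p n ω = none} = ENNReal.ofReal (t / (n + t)))
    (hparent : ∀ n : ℕ, ∀ j < n, μ {ω | p n ω = some j} = ENNReal.ofReal (1 / (n + t)))
    (hindep : iIndepFun (m := fun _ : ℕ => (inferInstance : MeasurableSpace (Option ℕ))) p μ)
    (n : ℕ) :
    wrrtB μ r p (n + 1) ≤ (1 + 2 * r / ((n + 1 : ℕ) + t)) * wrrtB μ r p n + (1 + 2 * r * t) := by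
  have := sum_wrrtDistPGF_some_succ_le ht hr0 hr1 hp hroot hparent hindep n
  rw [wrrtB_succ_eq hp hr0 hr1]
  have : 2 * r / ((n + 1 : ℕ) + t) * wrrtB μ r p n =
      2 * (r / ((n + 1 : ℕ) + t) * wrrtB μ r p n) := by ring
  linarith

end B

section Estimates

lemma le_mul_sum_prod_of_le_mul_add {b c : ℕ → ℝ} {K : ℝ} (hc : ∀ n, 0 ≤ c n)
    (hb0 : b 0 ≤ K) (hb : ∀ n, b (n + 1) ≤ c (n + 1) * b n + K) (n : ℕ) :
    b n ≤ K * ∑ k ∈ Finset.range (n + 1), ∏ j ∈ Finset.Ioc k n, c j := by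
  induction n with
  | zero => simpa using hb0
  | succ n ih =>
    have hprod : ∀ k ∈ Finset.range (n + 1),
        ∏ j ∈ Finset.Ioc k (n + 1), c j = c (n + 1) * ∏ j ∈ Finset.Ioc k n, c j :=
      fun k hk => by rw [Finset.prod_Ioc_succ_top (Finset.mem_range_succ_iff.1 hk), mul_comm]
    rw [Finset.sum_range_succ, Finset.sum_congr rfl hprod, ← Finset.mul_sum]
    calc b (n + 1) ≤ c (n + 1) * b n + K := hb n
      _ ≤ c (n + 1) * (K * ∑ k ∈ Finset.range (n + 1), ∏ j ∈ Finset.Ioc k n, c j) + K := by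
        gcongr
        exact hc _
      _ = _ := by simp; ring

lemma sum_Ioc_inv_add_le_log {t : ℝ} (ht : 0 < t) {k n : ℕ} (hkn : k ≤ n) :
    ∑ j ∈ Finset.Ioc k n, 1 / ((j : ℝ) + t) ≤ Real.log (n + t) - Real.log (k + t) := by
  induction n, hkn using Nat.le_induction with
  | base => simp
  | succ n hkn ih =>
    have h₀ : (0 : ℝ) < n + t := by positivity
    have h₁ : (0 : ℝ) < n + 1 + t := by positivity
    have hstep := Real.one_sub_inv_le_log_of_pos (div_pos h₁ h₀)
    rw [Real.log_div h₁.ne' h₀.ne', inv_div] at hstep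
    rw [Finset.sum_Ioc_succ_top (by omega)]
    push_cast
    have : 1 - (n + t) / (n + 1 + t) = 1 / (n + 1 + t) := by field_simp; ring
    linarith

lemma prod_Ioc_one_add_div_le_rpow {s t : ℝ} (hs : 0 ≤ s) (ht : 0 < t) {k n : ℕ}
    (hkn : k ≤ n) :
    ∏ j ∈ Finset.Ioc k n, (1 + s / ((j : ℝ) + t)) ≤ ((n + t) / (k + t)) ^ s := by
  calc ∏ j ∈ Finset.Ioc k n, (1 + s / ((j : ℝ) + t))
      ≤ ∏ j ∈ Finset.Ioc k n, Real.exp (s * (1 / ((j : ℝ) + t))) :=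
        Finset.prod_le_prod (fun j _ => by positivity) fun j _ => by
          rw [mul_one_div, add_comm]; exact Real.add_one_le_exp _
    _ = Real.exp (s * ∑ j ∈ Finset.Ioc k n, 1 / ((j : ℝ) + t)) := by
        rw [Finset.mul_sum, Real.exp_sum]
    _ ≤ Real.exp (s * (Real.log (n + t) - Real.log (k + t))) := by
        gcongr; exact sum_Ioc_inv_add_le_log ht hkn
    _ = ((n + t) / (k + t)) ^ s := by
        rw [Real.rpow_def_of_pos (by positivity), Real.log_div (by positivity) (by positivity),
          mul_comm]

lemma add_div_add_le {t x y : ℝ} (ht : 0 < t) (hx : 0 ≤ x) (hy : 0 ≤ y) :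
    (x + t) / (y + t) ≤ (1 + t) ^ 2 / t * ((x + 1) / (y + 1)) := by
  rw [div_mul_div_comm, div_le_div_iff₀ (by positivity) (by positivity)]
  calc (x + t) * (t * (y + 1)) ≤ ((1 + t) * (x + 1)) * ((1 + t) * (y + t)) :=
        mul_le_mul (by nlinarith) (by nlinarith) (by positivity) (by positivity)
    _ = (1 + t) ^ 2 * (x + 1) * (y + t) := by ring

lemma prod_Ioc_one_add_div_le {s t : ℝ} (hs : 0 ≤ s) (ht : 0 < t) {k n : ℕ} (hkn : k ≤ n) :
    ∏ j ∈ Finset.Ioc k n, (1 + s / ((j : ℝ) + t)) ≤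
      ((1 + t) ^ 2 / t) ^ s * (((n : ℝ) + 1) ^ s / ((k : ℝ) + 1) ^ s) := by
  calc _ ≤ (((n : ℝ) + t) / (k + t)) ^ s := prod_Ioc_one_add_div_le_rpow hs ht hkn
    _ ≤ ((1 + t) ^ 2 / t * ((n + 1) / (k + 1))) ^ s := by
        gcongr; exact add_div_add_le ht n.cast_nonneg k.cast_nonneg
    _ = _ := by rw [Real.mul_rpow (by positivity) (by positivity),
        Real.div_rpow (x := (n : ℝ) + 1) (by positivity) (by positivity)]

end Estimates

/-- **Estimate (3.15).** There is a constant `C > 0` (depending on `r` and `t`) with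
`B_n(r) ≤ C ∑_{k=0}^n (n+1)^{2r}/(k+1)^{2r}` for all `n ≥ 0`. -/
theorem wrrt_B_sum_bound
    {Ω : Type*} [MeasurableSpace Ω] (μ : Measure Ω) [IsProbabilityMeasure μ]
    (t r : ℝ) (ht : 0 < t) (hr : r ∈ Set.Ioo (0 : ℝ) 1)
    -- `p n` is the (random) parent of the vertex `w n` of the weighted random
    -- recursive tree with root weight `t`:
    (p : ℕ → Ω → Option ℕ) (hpmeas : ∀ n, Measurable (p n))
    (hroot : ∀ n : ℕ, μ {ω | p n ω = none} = ENNReal.ofReal (t / (n + t)))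
    (hparent : ∀ n : ℕ, ∀ j < n, μ {ω | p n ω = some j} = ENNReal.ofReal (1 / (n + t)))
    (hindep : iIndepFun (m := fun _ : ℕ => (inferInstance : MeasurableSpace (Option ℕ))) p μ)
    :
    ∃ C > 0, ∀ n : ℕ,
      wrrtB μ r p n ≤
        C * ∑ k ∈ Finset.range (n + 1), ((n : ℝ) + 1) ^ (2 * r) / ((k : ℝ) + 1) ^ (2 * r) := by
  obtain ⟨hr0, hr1⟩ := hr
  set K := 1 + 2 * r * t
  refine ⟨K * ((1 + t) ^ 2 / t) ^ (2 * r), by positivity, fun n => ?_⟩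
  calc wrrtB μ r p n
      ≤ K * ∑ k ∈ Finset.range (n + 1), ∏ j ∈ Finset.Ioc k n, (1 + 2 * r / ((j : ℝ) + t)) :=
        le_mul_sum_prod_of_le_mul_add (fun j => by positivity)
          (by rw [wrrtB_zero]; nlinarith [mul_pos hr0 ht])
          (wrrtB_succ_le ht hr0.le hr1.le hpmeas hroot hparent hindep) n
    _ ≤ K * ∑ k ∈ Finset.range (n + 1),
          ((1 + t) ^ 2 / t) ^ (2 * r) * (((n : ℝ) + 1) ^ (2 * r) / ((k : ℝ) + 1) ^ (2 * r)) := by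
        gcongr with k hk
        exact prod_Ioc_one_add_div_le (by positivity) ht (Finset.mem_range_succ_iff.1 hk)
    _ = _ := by rw [← Finset.mul_sum, mul_assoc]
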